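/- Let 𝕀 be an interval hypergraph on [n] that is closed under intersection. Then the map (i,j) ↦ A_{ij} is a bijection from ℐ𝒥_𝕀 to the set of join irreducible elements of the hypergraphic poset P_𝕀 (elements that are not minimal and cover exactly one element of P_𝕀). -/

import Mathlib

namespace IHL

/-- The hyperedges of a hypergraph, as a subtype. -/
abbrev Edge (𝕀 : Finset (Finset ℕ)) : Type := {H : Finset ℕ // H ∈ 𝕀}

/-- `ℋ` is a hypergraph on `[n] = {1,…,n}`: hyperedges are nonempty subsets of `[n]`
and all singletons belong to `ℋ`. -/
def IsHypergraph (n : ℕ) (ℋ : Finset (Finset ℕ)) : Prop :=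
  (∀ H ∈ ℋ, H.Nonempty ∧ H ⊆ Finset.Icc 1 n) ∧
    ∀ i, 1 ≤ i → i ≤ n → ({i} : Finset ℕ) ∈ ℋ

/-- `𝕀` is an interval hypergraph on `[n]`: hyperedges are intervals `[a,b] ⊆ [n]`
and all singletons belong to `𝕀`. -/
def IsIntervalHypergraph (n : ℕ) (𝕀 : Finset (Finset ℕ)) : Prop :=
  (∀ H ∈ 𝕀, ∃ a b, 1 ≤ a ∧ a ≤ b ∧ b ≤ n ∧ H = Finset.Icc a b) ∧
    ∀ i, 1 ≤ i → i ≤ n → ({i} : Finset ℕ) ∈ 𝕀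

/-- An orientation assigns to each hyperedge one of its elements. -/
def IsOrientation (𝕀 : Finset (Finset ℕ)) (O : Edge 𝕀 → ℕ) : Prop :=
  ∀ H : Edge 𝕀, O H ∈ H.1

/-- Acyclicity: there is no cyclic sequence `H_0, …, H_k` with `k ≥ 2`, `H_k = H_0`, and
`O (H (p+1)) ∈ H p \ {O (H p)}` for all `p < k`. -/
def IsAcyclic (𝕀 : Finset (Finset ℕ)) (O : Edge 𝕀 → ℕ) : Prop :=
  ¬∃ (k : ℕ) (H : ℕ → Edge 𝕀), 2 ≤ k ∧ H k = H 0 ∧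
    ∀ p < k, O (H (p + 1)) ∈ (H p).1 ∧ O (H (p + 1)) ≠ O (H p)

/-- An acyclic orientation, i.e. an element of the hypergraphic poset. -/
def AcycOr (𝕀 : Finset (Finset ℕ)) (O : Edge 𝕀 → ℕ) : Prop :=
  IsOrientation 𝕀 O ∧ IsAcyclic 𝕀 O

/-- Increasing flip from `O` to `O'` flipping `i` to `j`. -/
def IsIncFlip (n : ℕ) (𝕀 : Finset (Finset ℕ)) (i j : ℕ) (O O' : Edge 𝕀 → ℕ) : Prop :=
  O ≠ O' ∧ 1 ≤ i ∧ i < j ∧ j ≤ n ∧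
    ∀ H : Edge 𝕀,
      (O H ≠ O' H → O H = i ∧ O' H = j) ∧
      (i ∈ H.1 → j ∈ H.1 → (O H = i ↔ O' H = j))

/-- One increasing flip step between acyclic orientations. -/
def FlipStep (n : ℕ) (𝕀 : Finset (Finset ℕ)) (O O' : Edge 𝕀 → ℕ) : Prop :=
  AcycOr 𝕀 O ∧ AcycOr 𝕀 O' ∧ ∃ i j, IsIncFlip n 𝕀 i j O O'

/-- The order of the hypergraphic poset `P_𝕀`: reflexive-transitive closure of
the increasing flip relation on acyclic orientations. -/
def leP (n : ℕ) (𝕀 : Finset (Finset ℕ)) : (Edge 𝕀 → ℕ) → (Edge 𝕀 → ℕ) → Prop :=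
  Relation.ReflTransGen (FlipStep n 𝕀)

/-- Strict order of the hypergraphic poset. -/
def ltP (n : ℕ) (𝕀 : Finset (Finset ℕ)) (A B : Edge 𝕀 → ℕ) : Prop :=
  leP n 𝕀 A B ∧ A ≠ B

/-- `B` covers `A` in `P_𝕀`. -/
def CoversP (n : ℕ) (𝕀 : Finset (Finset ℕ)) (A B : Edge 𝕀 → ℕ) : Prop :=
  ltP n 𝕀 A B ∧ ¬∃ C, AcycOr 𝕀 C ∧ ltP n 𝕀 A C ∧ ltP n 𝕀 C B

/-- `𝕀` is closed under intersection. -/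
def ClosedUnderIntersection (𝕀 : Finset (Finset ℕ)) : Prop :=
  ∀ I ∈ 𝕀, ∀ J ∈ 𝕀, (I ∩ J).Nonempty → I ∩ J ∈ 𝕀

/-- `π` is a permutation of `[n]` (it fixes everything outside `[1,n]`). -/
def IsPermOn (n : ℕ) (π : Equiv.Perm ℕ) : Prop :=
  ∀ x, x ∉ Finset.Icc 1 n → π x = x

/-- The surjection `Or` from permutations to acyclic orientations:
`Or_π (H) = π (min {p : π p ∈ H})`. -/
noncomputable def orMap (𝕀 : Finset (Finset ℕ)) (π : Equiv.Perm ℕ) : Edge 𝕀 → ℕ :=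
  fun H => π (sInf {p | π p ∈ H.1})

/-- The weak order on permutations of `[n]`, via inclusion of inversion sets. -/
def weakLe (n : ℕ) (σ τ : Equiv.Perm ℕ) : Prop :=
  ∀ a b, 1 ≤ a → a < b → b ≤ n → σ.symm b < σ.symm a → τ.symm b < τ.symm a

/-- `π` contains the pattern 231. -/
def Contains231 (n : ℕ) (π : Equiv.Perm ℕ) : Prop :=
  ∃ p q r, 1 ≤ p ∧ p < q ∧ q < r ∧ r ≤ n ∧ π r < π p ∧ π p < π q

/-- `π` contains the pattern 213. -/
def Contains213 (n : ℕ) (π : Equiv.Perm ℕ) : Prop :=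
  ∃ p q r, 1 ≤ p ∧ p < q ∧ q < r ∧ r ≤ n ∧ π q < π p ∧ π p < π r

/-- The partial order `≺_A`: transitive closure of `A H ≺ h` for `h ∈ H \ {A H}`. -/
def prec (𝕀 : Finset (Finset ℕ)) (A : Edge 𝕀 → ℕ) : ℕ → ℕ → Prop :=
  Relation.TransGen fun a b => ∃ H : Edge 𝕀, A H = a ∧ b ∈ H.1 ∧ b ≠ a

/-- The distributivity condition on interval hypergraphs: for all `I, J ∈ 𝕀` with
`I ⊈ J`, `J ⊈ I` and `I ∩ J ≠ ∅`, the intersection `I ∩ J` is in `𝕀` and is initial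
or final in any `K ∈ 𝕀` containing it. -/
def IsDistribHG (𝕀 : Finset (Finset ℕ)) : Prop :=
  ∀ I ∈ 𝕀, ∀ J ∈ 𝕀, ¬I ⊆ J → ¬J ⊆ I → (I ∩ J).Nonempty →
    (I ∩ J ∈ 𝕀 ∧ ∀ K ∈ 𝕀, I ∩ J ⊆ K → ((I ∩ J).min = K.min ∨ (I ∩ J).max = K.max))

/-- `j ∈ 𝒥_𝕀 = ⋃_{I ∈ 𝕀} (I \ {min I})`. -/
def InJI (𝕀 : Finset (Finset ℕ)) (j : ℕ) : Prop :=
  ∃ I ∈ 𝕀, j ∈ I ∧ ∃ y ∈ I, y < j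

/-- `Jj` is the interval `J_j = ⋂ {I ∈ 𝕀 : j ∈ I \ {min I}}`. -/
def IsJj (𝕀 : Finset (Finset ℕ)) (j : ℕ) (Jj : Finset ℕ) : Prop :=
  ∀ x, x ∈ Jj ↔ ∀ I ∈ 𝕀, j ∈ I → (∃ y ∈ I, y < j) → x ∈ I

/-- `Aj` is the orientation `A_j` (where `μj = min J_j`):
`A_j (J) = j` if `j ∈ J` and `min J = μ_j`, and `A_j (J) = min J` otherwise. -/
def IsAj (𝕀 : Finset (Finset ℕ)) (j μj : ℕ) (Aj : Edge 𝕀 → ℕ) : Prop :=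
  ∀ J : Edge 𝕀,
    (j ∈ J.1 ∧ IsLeast (J.1 : Set ℕ) μj → Aj J = j) ∧
    (¬(j ∈ J.1 ∧ IsLeast (J.1 : Set ℕ) μj) → IsLeast (J.1 : Set ℕ) (Aj J))

/-- `Jij` is the interval `J_{ij} = ⋂ {I ∈ 𝕀 : {i,j} ⊆ I}`. -/
def IsJij (𝕀 : Finset (Finset ℕ)) (i j : ℕ) (Jij : Finset ℕ) : Prop :=
  ∀ x, x ∈ Jij ↔ ∀ I ∈ 𝕀, i ∈ I → j ∈ I → x ∈ I

/-- `(i,j) ∈ ℐ𝒥_𝕀`, where `μij = min J_{ij}`: both lie in a common hyperedge and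
`i = max ([μ_{ij}, j) \ ⋃ {J \ {min J} : J ∈ 𝕀, J ⊆ [μ_{ij}, j)})`. -/
def InIJ (n : ℕ) (𝕀 : Finset (Finset ℕ)) (i j μij : ℕ) : Prop :=
  1 ≤ i ∧ i < j ∧ j ≤ n ∧ (∃ I ∈ 𝕀, i ∈ I ∧ j ∈ I) ∧
    IsGreatest {m | μij ≤ m ∧ m < j ∧
      ∀ J ∈ 𝕀, (∀ x ∈ J, μij ≤ x ∧ x < j) → m ∈ J → ∀ y ∈ J, m ≤ y} i

/-- `Aij` is the orientation `A_{ij}` (where `μij = min J_{ij}`):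
`A_{ij} (J) = j` if `j ∈ J` and `min J ≥ μ_{ij}`, and `A_{ij} (J) = min J` otherwise. -/
def IsAij (𝕀 : Finset (Finset ℕ)) (j μij : ℕ) (Aij : Edge 𝕀 → ℕ) : Prop :=
  ∀ J : Edge 𝕀,
    (j ∈ J.1 ∧ (∀ x ∈ J.1, μij ≤ x) → Aij J = j) ∧
    (¬(j ∈ J.1 ∧ (∀ x ∈ J.1, μij ≤ x)) → IsLeast (J.1 : Set ℕ) (Aij J))

/-- The reversal `x ↦ n - x + 1` on `[n]`. -/
def revPt (n x : ℕ) : ℕ := n - x + 1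

/-- The reversed hypergraph `ℋ↔`. -/
def revHG (n : ℕ) (ℋ : Finset (Finset ℕ)) : Finset (Finset ℕ) :=
  ℋ.image fun H => H.image (revPt n)


/-!
Every element strictly below `B` in the finite poset `P_𝕀` lies below an element covered by `B`,
and each cover is one increasing flip. The flips into `A_{ij}` come exactly from the orientations
`C_m` (`A_{ij}` with the lifted hyperedges through a candidate `m` turned to `m`), and every `C_m`
lies below `C_i` for the largest candidate `i`, so `C_i` is the unique lower cover.

Conversely, in an acyclic orientation `B` any raised value `v` (`min H < B H = v` for some `H`)
can be lowered by one flip `x → v`, with `x` chosen `≺_B`-minimal in `[min H, v)`. If `B` has a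
unique lower cover, all these flips lie below it, so every raised hyperedge points to the same `v`,
and the raised hyperedge with least minimum `μ` shows `B = A_{ij}` with `j = v`, `μ_{ij} = μ`.
-/

open Relation

theorem _root_.Relation.TransGen.exists_seq {α : Type*} {r : α → α → Prop} {a b : α}
    (h : TransGen r a b) :
    ∃ k, 0 < k ∧ ∃ f : ℕ → α, f 0 = a ∧ f k = b ∧ ∀ p < k, r (f p) (f (p + 1)) := by
  induction h using TransGen.head_induction_on with
  | @single a hab =>
    exact ⟨1, one_pos, fun p => if p = 0 then a else b, by simp, by simp, by simpa⟩
  | @head a c hac _ ih =>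
    obtain ⟨k, -, f, hf0, hfk, hf⟩ := ih
    refine ⟨k + 1, k.succ_pos, fun | 0 => a | p + 1 => f p, rfl, hfk, ?_⟩
    rintro (_ | p) hp
    · simpa [hf0] using hac
    · exact hf p (by omega)

/-- The least element of `H`, the junk value `0` when `H` is empty. -/
noncomputable def minOf (H : Finset ℕ) : ℕ := sInf (H : Set ℕ)

lemma minOf_le {H : Finset ℕ} {x : ℕ} (hx : x ∈ H) : minOf H ≤ x :=
  Nat.sInf_le (Finset.mem_coe.2 hx)

lemma minOf_mem_of_nonempty {H : Finset ℕ} (hH : H.Nonempty) : minOf H ∈ H :=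
  Finset.mem_coe.1 (Nat.sInf_mem (Finset.coe_nonempty.2 hH))

lemma minOf_eq {H : Finset ℕ} {μ : ℕ} (hμ : μ ∈ H) (hle : ∀ x ∈ H, μ ≤ x) : minOf H = μ :=
  le_antisymm (minOf_le hμ) (hle _ (minOf_mem_of_nonempty ⟨μ, hμ⟩))

namespace IsIntervalHypergraph

variable {n : ℕ} {𝕀 : Finset (Finset ℕ)} (h𝕀 : IsIntervalHypergraph n 𝕀)
include h𝕀

lemma mem_of_le_of_le (H : Edge 𝕀) {x y z : ℕ} (hx : x ∈ H.1) (hy : y ∈ H.1) (hxz : x ≤ z)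
    (hzy : z ≤ y) : z ∈ H.1 := by
  obtain ⟨a, b, -, -, -, hab⟩ := h𝕀.1 H.1 H.2
  rw [hab, Finset.mem_Icc] at hx hy ⊢
  omega

lemma mem_Icc (H : Edge 𝕀) {x : ℕ} (hx : x ∈ H.1) : 1 ≤ x ∧ x ≤ n := by
  obtain ⟨a, b, ha, -, hb, hab⟩ := h𝕀.1 H.1 H.2
  rw [hab, Finset.mem_Icc] at hx
  omega

lemma minOf_mem (H : Edge 𝕀) : minOf H.1 ∈ H.1 := by
  obtain ⟨a, b, -, hab, -, he⟩ := h𝕀.1 H.1 H.2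
  exact minOf_mem_of_nonempty ⟨a, he ▸ Finset.mem_Icc.2 ⟨le_rfl, hab⟩⟩

end IsIntervalHypergraph

section Acyclic

variable {𝕀 : Finset (Finset ℕ)} (B : Edge 𝕀 → ℕ)

/-- The generating relation of `prec 𝕀 B`, which is `TransGen (arrow B)` by definition. -/
def arrow (a b : ℕ) : Prop := ∃ H : Edge 𝕀, B H = a ∧ b ∈ H.1 ∧ b ≠ a

/-- The relation between consecutive hyperedges of a cycle in `IsAcyclic`. -/
def edgeStep (H H' : Edge 𝕀) : Prop := B H' ∈ H.1 ∧ B H' ≠ B H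

lemma isAcyclic_iff_edgeStep : IsAcyclic 𝕀 B ↔ ∀ H, ¬TransGen (edgeStep B) H H := by
  constructor
  · intro hB H hH
    obtain ⟨k, hk, f, hf0, hfk, hf⟩ := hH.exists_seq
    obtain rfl | hk2 : k = 1 ∨ 2 ≤ k := by omega
    · exact (hf 0 one_pos).2 (by rw [hf0, hfk])
    · exact hB ⟨k, f, hk2, hfk.trans hf0.symm, hf⟩
  · rintro hB ⟨k, H, hk, hHk, hH⟩
    have hpath : ∀ p, 1 ≤ p → p ≤ k → TransGen (edgeStep B) (H 0) (H p) := by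
      intro p hp1 hpk
      induction p with
      | zero => omega
      | succ p ih =>
        obtain rfl | hp := Nat.eq_zero_or_pos p
        · exact .single (hH 0 (by omega))
        · exact (ih hp (by omega)).tail (hH p (by omega))
    exact hB _ (hHk ▸ hpath k (by omega) le_rfl)

lemma exists_edgeStep_of_prec {a b : ℕ} (h : prec 𝕀 B a b) :
    ∃ H H', B H = a ∧ ReflTransGen (edgeStep B) H H' ∧ b ∈ H'.1 ∧ b ≠ B H' := by
  induction h with
  | single hab =>
    obtain ⟨H, rfl, hb, hne⟩ := hab
    exact ⟨H, H, rfl, .refl, hb, hne⟩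
  | tail _ hcb ih =>
    obtain ⟨H, H', rfl, hHH', hc, hne⟩ := ih
    obtain ⟨K, rfl, hb, hbne⟩ := hcb
    exact ⟨H, K, rfl, hHH'.tail ⟨hc, hne⟩, hb, hbne⟩

lemma isAcyclic_iff_irrefl : IsAcyclic 𝕀 B ↔ ∀ a, ¬prec 𝕀 B a a := by
  rw [isAcyclic_iff_edgeStep]
  constructor
  · intro hB a ha
    obtain ⟨H, H', rfl, hHH', ha, hne⟩ := exists_edgeStep_of_prec B ha
    exact hB H (.tail' hHH' ⟨ha, hne⟩)
  · intro hB H hH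
    exact hB (B H) (TransGen.lift B (fun K K' h => ⟨K, rfl, h⟩) H H hH)

lemma isAcyclic_of_rank (r : ℕ → ℕ) (hr : ∀ H : Edge 𝕀, ∀ y ∈ H.1, y ≠ B H → r (B H) < r y) :
    IsAcyclic 𝕀 B := by
  have hmono : ∀ a b, prec 𝕀 B a b → r a < r b := by
    intro a b hab
    induction hab with
    | single h => obtain ⟨H, rfl, hy, hne⟩ := h; exact hr H _ hy hne
    | tail _ h ih => obtain ⟨H, rfl, hy, hne⟩ := h; exact ih.trans (hr H _ hy hne)
  exact (isAcyclic_iff_irrefl B).2 fun a ha => lt_irrefl _ (hmono a a ha)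

variable {B}

lemma IsAcyclic.irrefl (hB : IsAcyclic 𝕀 B) (a : ℕ) : ¬prec 𝕀 B a a :=
  (isAcyclic_iff_irrefl B).1 hB a

lemma IsAcyclic.not_arrow (hB : IsAcyclic 𝕀 B) {a b : ℕ} (hab : arrow B a b) : ¬arrow B b a :=
  fun hba => hB.irrefl a (.head hab (.single hba))

open Classical in
noncomputable def depth (B : Edge 𝕀 → ℕ) (z : ℕ) : ℕ :=
  ((Finset.univ.image B).filter (prec 𝕀 B · z)).card

lemma depth_lt_depth (hB : IsAcyclic 𝕀 B) {a b : ℕ} (hab : prec 𝕀 B a b) :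
    depth B a < depth B b := by
  classical
  unfold depth
  refine Finset.card_lt_card ((Finset.ssubset_iff_of_subset fun w hw => ?_).2 ⟨a, ?_, ?_⟩)
  · simp only [Finset.mem_filter] at hw ⊢
    exact ⟨hw.1, hw.2.trans hab⟩
  · obtain ⟨H, -, rfl, -⟩ := exists_edgeStep_of_prec B hab
    simpa using hab
  · simp [hB.irrefl a]

lemma depth_lt_card (z : ℕ) : depth B z < Fintype.card (Edge 𝕀) + 1 := by
  classical
  unfold depth
  calc _ ≤ (Finset.univ.image B).card := Finset.card_filter_le _ _
    _ ≤ Finset.univ.card := Finset.card_image_le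
    _ < Fintype.card (Edge 𝕀) + 1 := Nat.lt_succ_self _

end Acyclic

section Poset

variable {n : ℕ} {𝕀 : Finset (Finset ℕ)} {O O' A B C C₀ D : Edge 𝕀 → ℕ}

lemma IsIntervalHypergraph.isIncFlip (h𝕀 : IsIntervalHypergraph n 𝕀) {i j : ℕ} (H₀ : Edge 𝕀)
    (hi : i ∈ H₀.1) (hj : j ∈ H₀.1) (hO : O H₀ = i) (hO' : O' H₀ = j) (hij : i < j)
    (h : ∀ H : Edge 𝕀, (O H ≠ O' H → O H = i ∧ O' H = j) ∧
      (i ∈ H.1 → j ∈ H.1 → (O H = i ↔ O' H = j))) :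
    IsIncFlip n 𝕀 i j O O' :=
  ⟨fun he => hij.ne (hO ▸ hO' ▸ congrFun he H₀), (h𝕀.mem_Icc H₀ hi).1, hij,
    (h𝕀.mem_Icc H₀ hj).2, h⟩

lemma FlipStep.le (h : FlipStep n 𝕀 O O') (H : Edge 𝕀) : O H ≤ O' H := by
  obtain ⟨-, -, i, j, -, -, hij, -, hH⟩ := h
  by_cases he : O H = O' H
  · exact he.le
  · have := (hH H).1 he
    omega

lemma FlipStep.ne (h : FlipStep n 𝕀 O O') : O ≠ O' := by
  obtain ⟨-, -, i, j, hne, -⟩ := h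
  exact hne

lemma FlipStep.ltP (h : FlipStep n 𝕀 O O') : ltP n 𝕀 O O' := ⟨.single h, h.ne⟩

lemma leP.le (h : leP n 𝕀 A B) (H : Edge 𝕀) : A H ≤ B H := by
  induction h with
  | refl => exact le_rfl
  | tail _ hBC ih => exact ih.trans (hBC.le H)

lemma leP.antisymm (hAB : leP n 𝕀 A B) (hBA : leP n 𝕀 B A) : A = B :=
  funext fun H => le_antisymm (hAB.le H) (hBA.le H)

lemma ltP.exists_flipStep (h : ltP n 𝕀 A B) : ∃ E, leP n 𝕀 A E ∧ FlipStep n 𝕀 E B := by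
  rcases ReflTransGen.cases_tail h.1 with hBA | ⟨E, hAE, hEB⟩
  · exact absurd hBA.symm h.2
  · exact ⟨E, hAE, hEB⟩

lemma CoversP.flipStep (h : CoversP n 𝕀 C B) : FlipStep n 𝕀 C B := by
  obtain ⟨E, hCE, hEB⟩ := h.1.exists_flipStep
  obtain rfl | hne := eq_or_ne C E
  · exact hEB
  · exact absurd ⟨E, hEB.1, ⟨hCE, hne⟩, hEB.ltP⟩ h.2

def weight (B : Edge 𝕀 → ℕ) : ℕ := ∑ H, B H

lemma ltP.weight_lt (h : ltP n 𝕀 A B) : weight A < weight B := by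
  obtain ⟨H, hH⟩ := Function.ne_iff.1 h.2
  exact Finset.sum_lt_sum (fun H _ => h.1.le H) ⟨H, Finset.mem_univ H, (h.1.le H).lt_of_ne hH⟩

lemma leP_of_ltP_of_forall_covers_eq (huniq : ∀ C, AcycOr 𝕀 C ∧ CoversP n 𝕀 C B → C = C₀)
    (hD : AcycOr 𝕀 D) (hDB : ltP n 𝕀 D B) : leP n 𝕀 D C₀ := by
  induction hw : weight B - weight D using Nat.strong_induction_on generalizing D with
  | _ m ih =>
    by_cases hcov : CoversP n 𝕀 D B
    · exact huniq D ⟨hD, hcov⟩ ▸ .refl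
    · obtain ⟨C, hC, hDC, hCB⟩ : ∃ C, AcycOr 𝕀 C ∧ ltP n 𝕀 D C ∧ ltP n 𝕀 C B := by
        simpa [CoversP, hDB] using hcov
      have := hDC.weight_lt
      have := hCB.weight_lt
      exact hDC.1.trans (ih _ (by omega) hC hCB rfl)

end Poset

/-- The hyperedges that `A_{ij}` orients to `j`, for `μ = μ_{ij}`. -/
def Lifts (j μ : ℕ) (H : Finset ℕ) : Prop := j ∈ H ∧ ∀ x ∈ H, μ ≤ x

lemma minOf_lt_of_not_lifts {j μ : ℕ} {H : Finset ℕ} (hL : ¬Lifts j μ H) (hj : j ∈ H) :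
    minOf H < μ := by
  by_contra! hμ
  exact hL ⟨hj, fun x hx => hμ.trans (minOf_le hx)⟩

open Classical in
/-- The orientation `A_{ij}`, which depends on `j` and `μ = μ_{ij}` only. -/
noncomputable def orientA (𝕀 : Finset (Finset ℕ)) (j μ : ℕ) : Edge 𝕀 → ℕ :=
  fun H => if Lifts j μ H.1 then j else minOf H.1

open Classical in
/-- `A_{ij}` with the lifted hyperedges through `i` turned to `i`: the element it covers. -/
noncomputable def orientC (𝕀 : Finset (Finset ℕ)) (i j μ : ℕ) : Edge 𝕀 → ℕ :=
  fun H => if Lifts j μ H.1 then (if i ∈ H.1 then i else j) else minOf H.1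

/-- The set `[μ, j) ∖ ⋃ {J ∖ {min J} : J ∈ 𝕀, J ⊆ [μ, j)}` whose maximum defines `ℐ𝒥_𝕀`. -/
def candidates (𝕀 : Finset (Finset ℕ)) (j μ : ℕ) : Set ℕ :=
  {m | μ ≤ m ∧ m < j ∧ ∀ J ∈ 𝕀, (∀ x ∈ J, μ ≤ x ∧ x < j) → m ∈ J → ∀ y ∈ J, m ≤ y}

section Orient

variable {n : ℕ} {𝕀 : Finset (Finset ℕ)} {i j μ : ℕ} {H : Edge 𝕀}

@[simp] lemma orientA_of_lifts (h : Lifts j μ H.1) : orientA 𝕀 j μ H = j := if_pos h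

@[simp] lemma orientA_of_not_lifts (h : ¬Lifts j μ H.1) : orientA 𝕀 j μ H = minOf H.1 :=
  if_neg h

@[simp] lemma orientC_of_lifts (h : Lifts j μ H.1) :
    orientC 𝕀 i j μ H = if i ∈ H.1 then i else j := if_pos h

@[simp] lemma orientC_of_not_lifts (h : ¬Lifts j μ H.1) : orientC 𝕀 i j μ H = minOf H.1 :=
  if_neg h

variable (h𝕀 : IsIntervalHypergraph n 𝕀)
include h𝕀

lemma minOf_eq_of_mem_candidates (hi : i ∈ candidates 𝕀 j μ) (hiH : i ∈ H.1)
    (hjH : j ∉ H.1) (hμ : μ ≤ minOf H.1) : minOf H.1 = i := by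
  refine minOf_eq hiH (hi.2.2 H.1 H.2 (fun x hx => ⟨hμ.trans (minOf_le hx), ?_⟩) hiH)
  by_contra! hjx
  exact hjH (h𝕀.mem_of_le_of_le H hiH hx hi.2.1.le hjx)

lemma isOrientation_orientA : IsOrientation 𝕀 (orientA 𝕀 j μ) := by
  intro H
  by_cases hL : Lifts j μ H.1
  · simpa [hL] using hL.1
  · simpa [hL] using h𝕀.minOf_mem H

lemma isOrientation_orientC : IsOrientation 𝕀 (orientC 𝕀 i j μ) := by
  intro H
  by_cases hL : Lifts j μ H.1
  · by_cases hi : i ∈ H.1 <;> simp [hL, hi, hL.1]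
  · simpa [hL] using h𝕀.minOf_mem H

lemma isAcyclic_orientA (hμj : μ < j) : IsAcyclic 𝕀 (orientA 𝕀 j μ) := by
  refine isAcyclic_of_rank _ (fun z => if z < μ then z else if z = j then μ else z + 1)
    fun H y hy hne => ?_
  by_cases hL : Lifts j μ H.1
  · rw [orientA_of_lifts hL] at hne ⊢
    have := hL.2 y hy
    split_ifs <;> omega
  · rw [orientA_of_not_lifts hL] at hne ⊢
    have hmy := minOf_le hy
    have hj : μ ≤ minOf H.1 → y ≠ j ∧ minOf H.1 ≠ j := fun hμ =>
      ⟨fun h => (minOf_lt_of_not_lifts hL (h ▸ hy)).not_ge hμ,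
        fun h => (minOf_lt_of_not_lifts hL (h ▸ h𝕀.minOf_mem H)).not_ge hμ⟩
    split_ifs <;> omega

lemma isAcyclic_orientC (hi : i ∈ candidates 𝕀 j μ) : IsAcyclic 𝕀 (orientC 𝕀 i j μ) := by
  have hμi := hi.1
  have hij := hi.2.1
  refine isAcyclic_of_rank _
    (fun z => if z < μ then z else if z = i then μ else if z = j then μ + 1 else z + 2)
    fun H y hy hne => ?_
  by_cases hL : Lifts j μ H.1
  · rw [orientC_of_lifts hL] at hne ⊢
    have := hL.2 y hy
    by_cases hiH : i ∈ H.1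
    · rw [if_pos hiH] at hne ⊢
      split_ifs <;> omega
    · have : y ≠ i := fun h => hiH (h ▸ hy)
      rw [if_neg hiH] at hne ⊢
      split_ifs <;> omega
  · rw [orientC_of_not_lifts hL] at hne ⊢
    have hmy := minOf_le hy
    have hj : μ ≤ minOf H.1 → y ≠ j ∧ minOf H.1 ≠ j := fun hμ =>
      ⟨fun h => (minOf_lt_of_not_lifts hL (h ▸ hy)).not_ge hμ,
        fun h => (minOf_lt_of_not_lifts hL (h ▸ h𝕀.minOf_mem H)).not_ge hμ⟩
    have hi : μ ≤ minOf H.1 → minOf H.1 = i ∨ (minOf H.1 ≠ i ∧ y ≠ i) := by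
      intro hμ
      by_cases hiH : i ∈ H.1
      · exact .inl (minOf_eq_of_mem_candidates h𝕀 hi hiH
          (fun hjH => (minOf_lt_of_not_lifts hL hjH).not_ge hμ) hμ)
      · exact .inr ⟨fun h => hiH (h ▸ h𝕀.minOf_mem H), fun h => hiH (h ▸ hy)⟩
    split_ifs <;> omega

end Orient

/-- `(i, j) ∈ ℐ𝒥_𝕀` with `μ_{ij} = μ`, phrased through hyperedges instead of `J_{ij}`. -/
structure IsIJ (𝕀 : Finset (Finset ℕ)) (i j μ : ℕ) : Prop where
  exists_lifts : ∃ H₀ : Edge 𝕀, Lifts j μ H₀.1 ∧ μ ∈ H₀.1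
  isGreatest : IsGreatest (candidates 𝕀 j μ) i
  mem_of_mem : ∀ H : Edge 𝕀, i ∈ H.1 → j ∈ H.1 → μ ∈ H.1

section Flips

variable {n : ℕ} {𝕀 : Finset (Finset ℕ)} {i j μ : ℕ} {H₀ : Edge 𝕀}
variable (h𝕀 : IsIntervalHypergraph n 𝕀) (hH₀ : Lifts j μ H₀.1) (hμH₀ : μ ∈ H₀.1)
include h𝕀 hH₀ hμH₀

lemma flipStep_orientC_orientA (hi : i ∈ candidates 𝕀 j μ) :
    FlipStep n 𝕀 (orientC 𝕀 i j μ) (orientA 𝕀 j μ) := by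
  have hiH₀ : i ∈ H₀.1 := h𝕀.mem_of_le_of_le H₀ hμH₀ hH₀.1 hi.1 hi.2.1.le
  refine ⟨⟨isOrientation_orientC h𝕀, isAcyclic_orientC h𝕀 hi⟩,
    ⟨isOrientation_orientA h𝕀, isAcyclic_orientA h𝕀 (hi.1.trans_lt hi.2.1)⟩, i, j,
    h𝕀.isIncFlip H₀ hiH₀ hH₀.1 (by simp [hH₀, hiH₀]) (by simp [hH₀]) hi.2.1 fun H => ?_⟩
  by_cases hL : Lifts j μ H.1
  · by_cases hiH : i ∈ H.1 <;> simp [hL, hiH]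
  · simp only [orientC_of_not_lifts hL, orientA_of_not_lifts hL, ne_eq, not_true_eq_false,
      false_implies, true_and]
    intro _ hjH
    have := minOf_lt_of_not_lifts hL hjH
    have := hi.1
    have := hi.2.1
    omega

lemma flipStep_orientC_orientC {i' : ℕ} (hi' : i' ∈ candidates 𝕀 j μ)
    (hi : i ∈ candidates 𝕀 j μ) (hlt : i' < i)
    (hsub : ∀ H : Edge 𝕀, j ∈ H.1 → i ∈ H.1 → i' ∈ H.1) :
    FlipStep n 𝕀 (orientC 𝕀 i' j μ) (orientC 𝕀 i j μ) := by
  have hiH₀ : i ∈ H₀.1 := h𝕀.mem_of_le_of_le H₀ hμH₀ hH₀.1 hi.1 hi.2.1.le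
  have hi'H₀ : i' ∈ H₀.1 := h𝕀.mem_of_le_of_le H₀ hμH₀ hH₀.1 hi'.1 hi'.2.1.le
  refine ⟨⟨isOrientation_orientC h𝕀, isAcyclic_orientC h𝕀 hi'⟩,
    ⟨isOrientation_orientC h𝕀, isAcyclic_orientC h𝕀 hi⟩, i', i,
    h𝕀.isIncFlip H₀ hi'H₀ hiH₀ (by simp [hH₀, hi'H₀]) (by simp [hH₀, hiH₀]) hlt fun H => ?_⟩
  by_cases hL : Lifts j μ H.1
  · by_cases hi'H : i' ∈ H.1
    · have hiH : i ∈ H.1 := h𝕀.mem_of_le_of_le H hi'H hL.1 hlt.le hi.2.1.le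
      simp [hL, hi'H, hiH]
    · have hiH : i ∉ H.1 := fun h => hi'H (hsub H hL.1 h)
      simp [hL, hi'H, hiH]
  · simp only [orientC_of_not_lifts hL, ne_eq, not_true_eq_false, false_implies, true_and]
    intro hi'H hiH
    by_cases hμ : μ ≤ minOf H.1
    · have := minOf_eq_of_mem_candidates h𝕀 hi hiH
        (fun hjH => (minOf_lt_of_not_lifts hL hjH).not_ge hμ) hμ
      have := minOf_le hi'H
      omega
    · have := hi.1
      have := hi'.1
      omega

lemma mem_candidates_of_isAcyclic {u : ℕ} (hμu : μ ≤ u) (huj : u < j)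
    (hC : IsAcyclic 𝕀 (orientC 𝕀 u j μ)) : u ∈ candidates 𝕀 j μ := by
  refine ⟨hμu, huj, fun J hJ hJsub huJ y hy => ?_⟩
  by_contra! hyu
  -- otherwise `H₀` and `J` form a 2-cycle between `u` and `min J`
  let K : Edge 𝕀 := ⟨J, hJ⟩
  have hm := h𝕀.minOf_mem K
  have hmy : minOf J ≤ y := minOf_le hy
  have hCK : orientC 𝕀 u j μ K = minOf J :=
    orientC_of_not_lifts fun h => (hJsub j h.1).2.false
  have hCH₀ : orientC 𝕀 u j μ H₀ = u := by
    rw [orientC_of_lifts hH₀, if_pos (h𝕀.mem_of_le_of_le H₀ hμH₀ hH₀.1 hμu huj.le)]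
  have hmH₀ : minOf J ∈ H₀.1 :=
    h𝕀.mem_of_le_of_le H₀ hμH₀ hH₀.1 (hJsub _ hm).1 (hJsub _ hm).2.le
  exact hC.not_arrow ⟨H₀, hCH₀, hmH₀, by omega⟩ ⟨K, hCK, huJ, by omega⟩

lemma exists_eq_orientC_of_flipStep {E : Edge 𝕀 → ℕ} (hμj : μ < j)
    (hE : FlipStep n 𝕀 E (orientA 𝕀 j μ)) :
    ∃ u ∈ candidates 𝕀 j μ, E = orientC 𝕀 u j μ := by
  obtain ⟨hE, -, u, w, hne, -, huw, -, hflip⟩ := hE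
  obtain ⟨H₁, hH₁⟩ := Function.ne_iff.1 hne
  obtain ⟨hEu, hAw⟩ := (hflip H₁).1 hH₁
  have huH₁ : u ∈ H₁.1 := hEu ▸ hE.1 H₁
  have hL₁ : Lifts j μ H₁.1 := by
    by_contra hL
    rw [orientA_of_not_lifts hL] at hAw
    have := minOf_le huH₁
    omega
  rw [orientA_of_lifts hL₁] at hAw
  subst hAw
  have hEC : E = orientC 𝕀 u j μ := by
    funext H
    by_cases hL : Lifts j μ H.1
    · rw [orientC_of_lifts hL]
      split_ifs with huH
      · exact ((hflip H).2 huH hL.1).2 (orientA_of_lifts hL)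
      · by_contra hEH
        rw [← orientA_of_lifts (𝕀 := 𝕀) hL] at hEH
        exact huH (((hflip H).1 hEH).1 ▸ hE.1 H)
    · rw [orientC_of_not_lifts hL, ← orientA_of_not_lifts hL]
      by_contra hEH
      have hmin := ((hflip H).1 hEH).2
      rw [orientA_of_not_lifts hL] at hmin
      exact hL ⟨hmin ▸ h𝕀.minOf_mem H, fun x hx => hμj.le.trans (hmin ▸ minOf_le hx)⟩
  subst hEC
  exact ⟨u, mem_candidates_of_isAcyclic h𝕀 hH₀ hμH₀ (hL₁.2 u huH₁) huw hE.2, rfl⟩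

lemma leP_orientC_of_ltP (hi : IsGreatest (candidates 𝕀 j μ) i)
    (hμ : ∀ H : Edge 𝕀, i ∈ H.1 → j ∈ H.1 → μ ∈ H.1) {M : Edge 𝕀 → ℕ}
    (hM : ltP n 𝕀 M (orientA 𝕀 j μ)) : leP n 𝕀 M (orientC 𝕀 i j μ) := by
  obtain ⟨E, hME, hEA⟩ := hM.exists_flipStep
  obtain ⟨u, hu, rfl⟩ :=
    exists_eq_orientC_of_flipStep h𝕀 hH₀ hμH₀ (hi.1.1.trans_lt hi.1.2.1) hEA
  obtain rfl | hlt := (hi.2 hu).eq_or_lt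
  · exact hME
  · refine hME.trans (.single (flipStep_orientC_orientC h𝕀 hH₀ hμH₀ hu hi.1 hlt ?_))
    exact fun H hjH hiH => h𝕀.mem_of_le_of_le H (hμ H hiH hjH) hjH hu.1 hu.2.1.le

lemma exists_isIJ_of_covers_orientA {C₀ : Edge 𝕀 → ℕ} (hμj : μ < j)
    (hcov : CoversP n 𝕀 C₀ (orientA 𝕀 j μ))
    (huniq : ∀ C, AcycOr 𝕀 C ∧ CoversP n 𝕀 C (orientA 𝕀 j μ) → C = C₀) :
    ∃ i, IsIJ 𝕀 i j μ := by
  have hμc : μ ∈ candidates 𝕀 j μ := ⟨le_rfl, hμj, fun J _ hJ _ y hy => (hJ y hy).1⟩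
  have hbdd : BddAbove (candidates 𝕀 j μ) := ⟨j, fun m hm => hm.2.1.le⟩
  have hi : IsGreatest (candidates 𝕀 j μ) (sSup (candidates 𝕀 j μ)) :=
    ⟨Nat.sSup_mem ⟨μ, hμc⟩ hbdd, fun m hm => le_csSup hbdd hm⟩
  set i := sSup (candidates 𝕀 j μ)
  have hle : ∀ u ∈ candidates 𝕀 j μ, leP n 𝕀 (orientC 𝕀 u j μ) C₀ := fun u hu =>
    have hflip := flipStep_orientC_orientA h𝕀 hH₀ hμH₀ hu
    leP_of_ltP_of_forall_covers_eq huniq hflip.1 hflip.ltP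
  have hmem : ∀ u ∈ candidates 𝕀 j μ, u ∈ H₀.1 := fun u hu =>
    h𝕀.mem_of_le_of_le H₀ hμH₀ hH₀.1 hu.1 hu.2.1.le
  obtain ⟨u, hu, rfl⟩ := exists_eq_orientC_of_flipStep h𝕀 hH₀ hμH₀ hμj hcov.flipStep
  obtain rfl : u = i := by
    have := (hle i hi.1).le H₀
    rw [orientC_of_lifts hH₀, orientC_of_lifts hH₀, if_pos (hmem i hi.1),
      if_pos (hmem u hu)] at this
    exact le_antisymm (hi.2 hu) this
  refine ⟨i, ⟨H₀, hH₀, hμH₀⟩, hi, fun K hiK hjK => ?_⟩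
  by_contra hμK
  have hK : Lifts j μ K.1 := ⟨hjK, fun x hx => by
    by_contra! hxμ
    exact hμK (h𝕀.mem_of_le_of_le K hx hiK hxμ.le hi.1.1)⟩
  have := (hle μ hμc).le K
  rw [orientC_of_lifts hK, orientC_of_lifts hK, if_neg hμK, if_pos hiK] at this
  exact absurd hi.1.2.1 (not_lt.2 this)

end Flips

section IJ

variable {n : ℕ} {𝕀 : Finset (Finset ℕ)} {i j μ : ℕ} {J : Finset ℕ}

lemma IsAij.eq_orientA (h𝕀 : IsIntervalHypergraph n 𝕀) {F : Edge 𝕀 → ℕ} (hF : IsAij 𝕀 j μ F) :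
    F = orientA 𝕀 j μ := by
  funext H
  by_cases hL : Lifts j μ H.1
  · rw [orientA_of_lifts hL]
    exact (hF H).1 hL
  · rw [orientA_of_not_lifts hL]
    exact ((hF H).2 hL).unique ⟨h𝕀.minOf_mem H, fun x hx => minOf_le hx⟩

lemma IsIJ.of_inIJ (h𝕀 : IsIntervalHypergraph n 𝕀) (hJ : IsJij 𝕀 i j J)
    (hμ : IsLeast (J : Set ℕ) μ) (h : InIJ n 𝕀 i j μ) : IsIJ 𝕀 i j μ := by
  obtain ⟨-, -, -, ⟨I, hI, hiI, hjI⟩, hi⟩ := h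
  have hμJ : ∀ H : Edge 𝕀, i ∈ H.1 → j ∈ H.1 → μ ∈ H.1 :=
    fun H hiH hjH => (hJ μ).1 hμ.1 H.1 H.2 hiH hjH
  refine ⟨?_, hi, hμJ⟩
  have hμi : μ ≤ i := hμ.2 ((hJ i).2 fun _ _ hi _ => hi)
  by_contra! hlow
  have hpred : ∀ I ∈ 𝕀, i ∈ I → j ∈ I → μ - 1 ∈ I := by
    intro I hI hiI hjI
    by_contra hI'
    refine hlow ⟨I, hI⟩ ⟨hjI, fun x hx => ?_⟩ (hμJ ⟨I, hI⟩ hiI hjI)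
    by_contra! hxμ
    exact hI' (h𝕀.mem_of_le_of_le ⟨I, hI⟩ hx hiI (by omega) (by omega))
  have := hμ.2 ((hJ _).2 hpred)
  exact hlow ⟨I, hI⟩ ⟨hjI, fun x _ => by omega⟩ (hμJ ⟨I, hI⟩ hiI hjI)

variable (h𝕀 : IsIntervalHypergraph n 𝕀)
include h𝕀

lemma IsIJ.inIJ (h : IsIJ 𝕀 i j μ) : InIJ n 𝕀 i j μ := by
  obtain ⟨⟨H₀, hH₀, hμH₀⟩, hi, -⟩ := h
  have hiH₀ : i ∈ H₀.1 := h𝕀.mem_of_le_of_le H₀ hμH₀ hH₀.1 hi.1.1 hi.1.2.1.le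
  exact ⟨(h𝕀.mem_Icc H₀ hiH₀).1, hi.1.2.1, (h𝕀.mem_Icc H₀ hH₀.1).2, ⟨H₀.1, H₀.2, hiH₀, hH₀.1⟩, hi⟩

lemma IsIJ.eq_of_isLeast (h : IsIJ 𝕀 i j μ) (hJ : IsJij 𝕀 i j J) {μ' : ℕ}
    (hμ' : IsLeast (J : Set ℕ) μ') : μ' = μ := by
  obtain ⟨⟨H₀, hH₀, hμH₀⟩, hi, hμ⟩ := h
  have hiH₀ : i ∈ H₀.1 := h𝕀.mem_of_le_of_le H₀ hμH₀ hH₀.1 hi.1.1 hi.1.2.1.le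
  exact le_antisymm (hμ'.2 ((hJ μ).2 fun I hI hiI hjI => hμ ⟨I, hI⟩ hiI hjI))
    (hH₀.2 _ ((hJ μ').1 hμ'.1 H₀.1 H₀.2 hiH₀ hH₀.1))

lemma IsIJ.orientA_joinIrreducible (h : IsIJ 𝕀 i j μ) :
    AcycOr 𝕀 (orientA 𝕀 j μ) ∧ (¬∀ B, AcycOr 𝕀 B → leP n 𝕀 (orientA 𝕀 j μ) B) ∧
      ∃! B, AcycOr 𝕀 B ∧ CoversP n 𝕀 B (orientA 𝕀 j μ) := by
  obtain ⟨⟨H₀, hH₀, hμH₀⟩, hi, hμ⟩ := h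
  have hflip := flipStep_orientC_orientA h𝕀 hH₀ hμH₀ hi.1
  have hbelow := fun M => leP_orientC_of_ltP (M := M) h𝕀 hH₀ hμH₀ hi hμ
  refine ⟨hflip.2.1, fun hmin => hflip.ne (hflip.ltP.1.antisymm (hmin _ hflip.1)),
    orientC 𝕀 i j μ, ⟨hflip.1, hflip.ltP, ?_⟩, ?_⟩
  · rintro ⟨M, -, hCM, hMA⟩
    exact hCM.2 (hCM.1.antisymm (hbelow M hMA))
  · rintro B ⟨-, hBA⟩
    by_contra hne
    exact hBA.2 ⟨_, hflip.1, ⟨hbelow B hBA.1, hne⟩, hflip.ltP⟩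

omit h𝕀 in
lemma eq_and_le_of_orientA_eq {l μ' : ℕ} {H : Edge 𝕀} (he : orientA 𝕀 j μ = orientA 𝕀 l μ')
    (hH : Lifts l μ' H.1) (hμH : μ' ∈ H.1) (hμl : μ' < l) : j = l ∧ μ ≤ μ' := by
  have hval := congrFun he H
  rw [orientA_of_lifts hH] at hval
  by_cases hL : Lifts j μ H.1
  · rw [orientA_of_lifts hL] at hval
    exact ⟨hval, hL.2 _ hμH⟩
  · rw [orientA_of_not_lifts hL, minOf_eq hμH hH.2] at hval
    omega

omit h𝕀 in
lemma IsIJ.eq_of_orientA_eq {k l μ' : ℕ} (h : IsIJ 𝕀 i j μ) (h' : IsIJ 𝕀 k l μ')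
    (he : orientA 𝕀 j μ = orientA 𝕀 l μ') : i = k ∧ j = l := by
  obtain ⟨⟨H₀, hH₀, hμH₀⟩, hi, -⟩ := h
  obtain ⟨⟨H₀', hH₀', hμH₀'⟩, hk, -⟩ := h'
  obtain ⟨rfl, hle⟩ := eq_and_le_of_orientA_eq he hH₀' hμH₀' (hk.1.1.trans_lt hk.1.2.1)
  obtain ⟨-, hge⟩ := eq_and_le_of_orientA_eq he.symm hH₀ hμH₀ (hi.1.1.trans_lt hi.1.2.1)
  obtain rfl := le_antisymm hle hge
  exact ⟨hi.unique hk, rfl⟩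

end IJ

open Classical in
noncomputable def reorient {𝕀 : Finset (Finset ℕ)} (B : Edge 𝕀 → ℕ) (x v : ℕ) : Edge 𝕀 → ℕ :=
  fun H => if B H = v ∧ x ∈ H.1 then x else B H

section Lowering

variable {n : ℕ} {𝕀 : Finset (Finset ℕ)} {B : Edge 𝕀 → ℕ} {μ x v : ℕ}

lemma not_arrow_of_prec (h𝕀 : IsIntervalHypergraph n 𝕀) (hB : AcycOr 𝕀 B)
    (hlow : ∀ K : Edge 𝕀, B K = v → ∀ y ∈ K.1, μ ≤ y) (hμx : μ ≤ x) (hxv : x < v)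
    (hx : ∀ y, μ ≤ y → y < v → ¬prec 𝕀 B y x) {a : ℕ} (hva : prec 𝕀 B v a) (hax : a ≠ x) :
    ¬arrow B a x := by
  have hupper : ∀ a, prec 𝕀 B v a → μ ≤ a → arrow B a x ∨ (a < μ ∧ prec 𝕀 B a x) → False := by
    rintro a hva hμa (hax | ⟨haμ, -⟩)
    · rcases lt_trichotomy a v with hav | rfl | hav
      · exact hx a hμa hav (.single hax)
      · exact hB.2.irrefl _ hva
      · obtain ⟨K, hK, hxK, -⟩ := hax
        have hvK := h𝕀.mem_of_le_of_le K hxK (hK ▸ hB.1 K) hxv.le hav.le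
        exact hB.2.irrefl _ (hva.tail ⟨K, hK, hvK, hav.ne⟩)
    · omega
  -- walk back along a path from `v`, keeping the current vertex below `μ`
  suffices ∀ a, prec 𝕀 B v a → a ≠ x → arrow B a x ∨ (a < μ ∧ prec 𝕀 B a x) → False from
    fun h => this a hva hax (.inl h)
  intro a hva
  induction hva with
  | single hva =>
    obtain ⟨K, hK, haK, -⟩ := id hva
    exact fun _ => hupper _ (.single hva) (hlow K hK _ haK)
  | @tail b a hvb hba ih =>
    intro hax hP
    by_cases hμa : μ ≤ a
    · exact hupper _ (hvb.tail hba) hμa hP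
    have hax' : prec 𝕀 B a x := hP.elim .single And.right
    have hbx' : prec 𝕀 B b x := .head hba hax'
    obtain ⟨K, hK, haK, -⟩ := id hba
    have hbx : b ≠ x := by
      rintro rfl
      exact hB.2.irrefl _ hbx'
    refine ih hbx ?_
    by_cases hbμ : b < μ
    · exact .inr ⟨hbμ, hbx'⟩
    rcases hbx.lt_or_gt with hbx | hbx
    · exact absurd hbx' (hx b (by omega) (by omega))
    · exact .inl ⟨K, hK, h𝕀.mem_of_le_of_le K haK (hK ▸ hB.1 K) (by omega) hbx.le, hbx.ne⟩

open Classical in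
lemma isAcyclic_reorient (hB : IsAcyclic 𝕀 B) (hvx : arrow B v x)
    (hstar : ∀ a, prec 𝕀 B v a → a ≠ x → ¬arrow B a x) : IsAcyclic 𝕀 (reorient B x v) := by
  -- `x` moves up just below the descendants of `v`, which move up above everything else
  refine isAcyclic_of_rank _ (fun z => (if z = x then 1 else if ReflTransGen (arrow B) v z
    then 2 else 0) * (Fintype.card (Edge 𝕀) + 1) + depth B z) fun H y hy hne => ?_
  have := depth_lt_card (B := B) y
  by_cases hf : B H = v ∧ x ∈ H.1
  · have hvy : ReflTransGen (arrow B) v y := by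
      by_cases hyv : y = v
      · exact hyv ▸ .refl
      · exact .single ⟨H, hf.1, hy, hyv⟩
    unfold reorient at hne ⊢
    rw [if_pos hf] at hne ⊢
    have := depth_lt_card (B := B) x
    rw [if_pos rfl, if_neg hne, if_pos hvy]
    omega
  have hC : reorient B x v H = B H := if_neg hf
  rw [hC] at hne ⊢
  have harr : arrow B (B H) y := ⟨H, rfl, hy, hne⟩
  have := depth_lt_depth hB (.single harr)
  by_cases hax : B H = x
  · have hvy : ReflTransGen (arrow B) v y := .tail (.single hvx) (hax ▸ harr)
    rw [if_pos hax, if_neg (hax ▸ hne), if_pos hvy]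
    omega
  by_cases hva : ReflTransGen (arrow B) v (B H)
  · have hyx : y ≠ x := by
      rintro rfl
      rcases reflTransGen_iff_eq_or_transGen.1 hva with hv | hva
      · exact hf ⟨hv, hy⟩
      · exact hstar _ hva hax harr
    rw [if_neg hax, if_pos hva, if_neg hyx, if_pos (hva.tail harr)]
    omega
  · rw [if_neg hax, if_neg hva]
    split_ifs <;> omega

lemma flipStep_reorient (h𝕀 : IsIntervalHypergraph n 𝕀) (hB : AcycOr 𝕀 B) {H₁ : Edge 𝕀}
    (hH₁ : B H₁ = v) (hxH₁ : x ∈ H₁.1) (hxv : x < v)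
    (hstar : ∀ a, prec 𝕀 B v a → a ≠ x → ¬arrow B a x) :
    FlipStep n 𝕀 (reorient B x v) B := by
  have hvH₁ : v ∈ H₁.1 := hH₁ ▸ hB.1 H₁
  have hvx : arrow B v x := ⟨H₁, hH₁, hxH₁, hxv.ne⟩
  have horient : IsOrientation 𝕀 (reorient B x v) := by
    intro H
    unfold reorient
    split_ifs with hf
    exacts [hf.2, hB.1 H]
  refine ⟨⟨horient, isAcyclic_reorient hB.2 hvx hstar⟩, hB, x, v,
    h𝕀.isIncFlip H₁ hxH₁ hvH₁ (if_pos ⟨hH₁, hxH₁⟩) hH₁ hxv fun H => ⟨?_, fun hxH hvH => ?_⟩⟩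
  · unfold reorient
    split_ifs with hf
    exacts [fun _ => ⟨rfl, hf.1⟩, fun h => absurd rfl h]
  · unfold reorient
    by_cases hf : B H = v
    · simp [hf, hxH]
    · rw [if_neg fun h => hf h.1]
      exact ⟨fun hx => absurd ⟨H, hx, hvH, hxv.ne'⟩ (hB.2.not_arrow hvx), fun h => absurd h hf⟩

lemma eq_of_reorient_ne (H : Edge 𝕀) (h : reorient B x v H ≠ B H) : B H = v := by
  unfold reorient at h
  split_ifs at h with hf
  exacts [hf.1, absurd rfl h]

lemma exists_flipStep_of_raised (h𝕀 : IsIntervalHypergraph n 𝕀) (hB : AcycOr 𝕀 B)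
    {H₂ : Edge 𝕀} (hH₂ : minOf H₂.1 < B H₂) :
    ∃ C, FlipStep n 𝕀 C B ∧ ∀ H, C H ≠ B H → B H = B H₂ := by
  classical
  obtain ⟨H₁, hH₁v, hH₁min⟩ := Finset.exists_min_image
    (Finset.univ.filter (B · = B H₂)) (fun K => minOf K.1) ⟨H₂, by simp⟩
  simp only [Finset.mem_filter, Finset.mem_univ, true_and] at hH₁v hH₁min
  have hμv : minOf H₁.1 < B H₂ := (hH₁min H₂ rfl).trans_lt hH₂
  obtain ⟨x, hxI, hxmin⟩ := Finset.exists_min_image (Finset.Ico (minOf H₁.1) (B H₂)) (depth B)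
    ⟨_, Finset.mem_Ico.2 ⟨le_rfl, hμv⟩⟩
  rw [Finset.mem_Ico] at hxI
  have hxH₁ : x ∈ H₁.1 :=
    h𝕀.mem_of_le_of_le H₁ (h𝕀.minOf_mem H₁) (hH₁v ▸ hB.1 H₁) hxI.1 hxI.2.le
  have hstar : ∀ a, prec 𝕀 B (B H₂) a → a ≠ x → ¬arrow B a x := fun a =>
    not_arrow_of_prec h𝕀 hB (fun K hK y hy => (hH₁min K hK).trans (minOf_le hy)) hxI.1 hxI.2
      (fun y h1 h2 hyx => (depth_lt_depth hB.2 hyx).not_ge (hxmin y (Finset.mem_Ico.2 ⟨h1, h2⟩)))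
  exact ⟨_, flipStep_reorient h𝕀 hB hH₁v hxH₁ hxI.2 hstar, eq_of_reorient_ne⟩

end Lowering

section JoinIrreducible

variable {n : ℕ} {𝕀 : Finset (Finset ℕ)} {B C₀ : Edge 𝕀 → ℕ}
variable (h𝕀 : IsIntervalHypergraph n 𝕀) (hB : AcycOr 𝕀 B)
include h𝕀 hB

lemma exists_forall_raised_eq (hC₀ : CoversP n 𝕀 C₀ B)
    (huniq : ∀ C, AcycOr 𝕀 C ∧ CoversP n 𝕀 C B → C = C₀) :
    ∃ v, ∀ H : Edge 𝕀, minOf H.1 < B H → B H = v := by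
  obtain ⟨-, -, u, v, hne, -, -, -, hflip⟩ := hC₀.flipStep
  refine ⟨v, fun H₂ hH₂ => ?_⟩
  by_contra hv
  -- lowering the value `B H₂` gives a second element below `B`, which forces `C₀ = B`
  obtain ⟨C, hC, hCB⟩ := exists_flipStep_of_raised h𝕀 hB hH₂
  have hCC₀ := leP_of_ltP_of_forall_covers_eq huniq hC.1 hC.ltP
  refine hne (funext fun H => ?_)
  by_cases hH : B H = B H₂
  · by_contra h
    exact hv (hH ▸ ((hflip H).1 h).2)
  · have hCH : C H = B H := by
      by_contra h
      exact hH (hCB H h)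
    have := hCC₀.le H
    have := hC₀.1.1.le H
    omega

lemma eq_orientA_of_forall_raised_eq {v : ℕ} (hall : ∀ H : Edge 𝕀, minOf H.1 < B H → B H = v)
    {H₀ : Edge 𝕀} (hH₀ : minOf H₀.1 < B H₀)
    (hmin : ∀ H : Edge 𝕀, minOf H.1 < B H → minOf H₀.1 ≤ minOf H.1) :
    B = orientA 𝕀 v (minOf H₀.1) := by
  have hBH₀ := hall H₀ hH₀
  have hvH₀ : v ∈ H₀.1 := hBH₀ ▸ hB.1 H₀
  funext K
  have hmK := minOf_le (hB.1 K)
  by_cases hL : Lifts v (minOf H₀.1) K.1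
  · rw [orientA_of_lifts hL]
    rcases hmK.lt_or_eq with hr | heq
    · exact hall K hr
    by_contra hne
    have h1 : minOf H₀.1 ≤ B K := heq ▸ hL.2 _ (h𝕀.minOf_mem K)
    have h2 : B K ≤ v := heq ▸ minOf_le hL.1
    exact hB.2.not_arrow ⟨H₀, hBH₀, h𝕀.mem_of_le_of_le H₀ (h𝕀.minOf_mem H₀) hvH₀ h1 h2, hne⟩
      ⟨K, rfl, hL.1, Ne.symm hne⟩
  · rw [orientA_of_not_lifts hL]
    by_contra hne
    have hr : minOf K.1 < B K := lt_of_le_of_ne hmK (Ne.symm hne)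
    exact hL ⟨hall K hr ▸ hB.1 K, fun x hx => (hmin K hr).trans (minOf_le hx)⟩

lemma exists_isIJ_of_existsUnique_covers (hcov : ∃! C, AcycOr 𝕀 C ∧ CoversP n 𝕀 C B) :
    ∃ i j μ, IsIJ 𝕀 i j μ ∧ orientA 𝕀 j μ = B := by
  classical
  obtain ⟨C₀, ⟨hC₀, hcov⟩, huniq⟩ := hcov
  obtain ⟨v, hall⟩ := exists_forall_raised_eq h𝕀 hB hcov huniq
  have hraised : ∃ H : Edge 𝕀, minOf H.1 < B H := by
    obtain ⟨-, -, u, w, hne, -, huw, -, hflip⟩ := hcov.flipStep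
    obtain ⟨H, hH⟩ := Function.ne_iff.1 hne
    obtain ⟨hu, hw⟩ := (hflip H).1 hH
    have := minOf_le (hC₀.1 H)
    exact ⟨H, by omega⟩
  obtain ⟨H₀, hH₀, hmin⟩ := Finset.exists_min_image
    (Finset.univ.filter fun H : Edge 𝕀 => minOf H.1 < B H) (fun H => minOf H.1)
    (let ⟨H, hH⟩ := hraised; ⟨H, by simpa using hH⟩)
  simp only [Finset.mem_filter, Finset.mem_univ, true_and] at hH₀ hmin
  have hBA := eq_orientA_of_forall_raised_eq h𝕀 hB hall hH₀ hmin
  have hμv : minOf H₀.1 < v := hall H₀ hH₀ ▸ hH₀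
  have hL : Lifts v (minOf H₀.1) H₀.1 := ⟨hall H₀ hH₀ ▸ hB.1 H₀, fun x hx => minOf_le hx⟩
  subst hBA
  obtain ⟨i, hi⟩ := exists_isIJ_of_covers_orientA h𝕀 hL (h𝕀.minOf_mem H₀) hμv hcov huniq
  exact ⟨i, v, _, hi, rfl⟩

end JoinIrreducible

theorem stmt19_general (n : ℕ) (𝕀 : Finset (Finset ℕ))
    (h𝕀 : IsIntervalHypergraph n 𝕀)
    (Jp : ℕ → ℕ → Finset ℕ) (μ : ℕ → ℕ → ℕ) (Ap : ℕ → ℕ → Edge 𝕀 → ℕ)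
    (hfam : ∀ i j, 1 ≤ i → i < j → j ≤ n → (∃ I ∈ 𝕀, i ∈ I ∧ j ∈ I) →
      IsJij 𝕀 i j (Jp i j) ∧ IsLeast ((Jp i j : Finset ℕ) : Set ℕ) (μ i j) ∧
        IsAij 𝕀 j (μ i j) (Ap i j)) :
    (∀ i j, InIJ n 𝕀 i j (μ i j) →
      AcycOr 𝕀 (Ap i j) ∧
      (¬∀ B, AcycOr 𝕀 B → leP n 𝕀 (Ap i j) B) ∧
      (∃! B, AcycOr 𝕀 B ∧ CoversP n 𝕀 B (Ap i j))) ∧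
    (∀ i j k l, InIJ n 𝕀 i j (μ i j) → InIJ n 𝕀 k l (μ k l) →
      Ap i j = Ap k l → i = k ∧ j = l) ∧
    (∀ B, AcycOr 𝕀 B →
      (¬∀ C, AcycOr 𝕀 C → leP n 𝕀 B C) →
      (∃! C, AcycOr 𝕀 C ∧ CoversP n 𝕀 C B) →
      ∃ i j, InIJ n 𝕀 i j (μ i j) ∧ Ap i j = B) := by
  have hIJ : ∀ i j, InIJ n 𝕀 i j (μ i j) →
      IsIJ 𝕀 i j (μ i j) ∧ Ap i j = orientA 𝕀 j (μ i j) := fun i j h =>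
    let ⟨hJ, hμ, hA⟩ := hfam i j h.1 h.2.1 h.2.2.1 h.2.2.2.1
    ⟨IsIJ.of_inIJ h𝕀 hJ hμ h, hA.eq_orientA h𝕀⟩
  refine ⟨fun i j h => ?_, fun i j k l h h' he => ?_, fun B hB _ hcov => ?_⟩
  · obtain ⟨hT, hA⟩ := hIJ i j h
    exact hA ▸ hT.orientA_joinIrreducible h𝕀
  · obtain ⟨hT, hA⟩ := hIJ i j h
    obtain ⟨hT', hA'⟩ := hIJ k l h'
    exact hT.eq_of_orientA_eq hT' (hA ▸ hA' ▸ he)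
  · obtain ⟨i, j, μ', hT, rfl⟩ := exists_isIJ_of_existsUnique_covers h𝕀 hB hcov
    have h := hT.inIJ h𝕀
    obtain ⟨hJ, hμ, hA⟩ := hfam i j h.1 h.2.1 h.2.2.1 h.2.2.2.1
    obtain rfl := hT.eq_of_isLeast h𝕀 hJ hμ
    exact ⟨i, j, h, hA.eq_orientA h𝕀⟩

/-- For an interval hypergraph `𝕀` closed under intersection, the
map `(i,j) ↦ A_{ij}` is a bijection from `ℐ𝒥_𝕀` to the join irreducible elements of
`P_𝕀` (elements that are not minimal and cover exactly one element). -/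
theorem stmt19 (n : ℕ) (hn : 1 ≤ n) (𝕀 : Finset (Finset ℕ))
    (h𝕀 : IsIntervalHypergraph n 𝕀) (hcl : ClosedUnderIntersection 𝕀)
    (Jp : ℕ → ℕ → Finset ℕ) (μ : ℕ → ℕ → ℕ) (Ap : ℕ → ℕ → Edge 𝕀 → ℕ)
    (hfam : ∀ i j, 1 ≤ i → i < j → j ≤ n → (∃ I ∈ 𝕀, i ∈ I ∧ j ∈ I) →
      IsJij 𝕀 i j (Jp i j) ∧ IsLeast ((Jp i j : Finset ℕ) : Set ℕ) (μ i j) ∧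
        IsAij 𝕀 j (μ i j) (Ap i j)) :
    (∀ i j, InIJ n 𝕀 i j (μ i j) →
      AcycOr 𝕀 (Ap i j) ∧
      (¬∀ B, AcycOr 𝕀 B → leP n 𝕀 (Ap i j) B) ∧
      (∃! B, AcycOr 𝕀 B ∧ CoversP n 𝕀 B (Ap i j))) ∧
    (∀ i j k l, InIJ n 𝕀 i j (μ i j) → InIJ n 𝕀 k l (μ k l) →
      Ap i j = Ap k l → i = k ∧ j = l) ∧
    (∀ B, AcycOr 𝕀 B →
      (¬∀ C, AcycOr 𝕀 C → leP n 𝕀 B C) →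
      (∃! C, AcycOr 𝕀 C ∧ CoversP n 𝕀 C B) →
      ∃ i j, InIJ n 𝕀 i j (μ i j) ∧ Ap i j = B) :=
  stmt19_general n 𝕀 h𝕀 Jp μ Ap hfam
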